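/- arXiv:1707.03899 — 3 statements merged into one kernel-verified Lean document; each statement's English description precedes it below -/
import Mathlib

section
/- There is no continuous map g : SO(3) \ {I} → ℝ³ \ {0} such that for every rotation A ≠ I, g(A) is a nonzero vector lying on the rotation axis of A (i.e. A · g(A) = g(A)). -/
open Real Matrix

noncomputable def Mrot (θ : ℝ) : Matrix (Fin 3) (Fin 3) ℝ :=
  !![cos θ, sin θ, 0; sin θ, -cos θ, 0; 0, 0, -1]

lemma Mrot_mem (θ : ℝ) : Mrot θ ∈ Matrix.specialOrthogonalGroup (Fin 3) ℝ := by
  rw [Matrix.mem_specialOrthogonalGroup_iff]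
  constructor
  · rw [Matrix.mem_orthogonalGroup_iff]
    have h := sin_sq_add_cos_sq θ
    ext i j
    fin_cases i <;> fin_cases j <;>
      simp [Mrot, Matrix.mul_apply, Fin.sum_univ_three, star, Matrix.vecHead, Matrix.vecTail] <;> nlinarith
  · have h := sin_sq_add_cos_sq θ
    simp [Mrot, Matrix.det_fin_three]
    nlinarith

noncomputable def Frot (θ : ℝ) : {A : Matrix.specialOrthogonalGroup (Fin 3) ℝ // A ≠ 1} :=
  ⟨⟨Mrot θ, Mrot_mem θ⟩, by
    intro h
    have h2 : Mrot θ 2 2 = (1 : Matrix (Fin 3) (Fin 3) ℝ) 2 2 := by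
      have := congrArg (fun A => (A : Matrix.specialOrthogonalGroup (Fin 3) ℝ).1 2 2) h
      simpa using this
    simp [Mrot, Matrix.one_apply] at h2
    norm_num at h2⟩

lemma continuous_Frot : Continuous Frot := by
  apply Continuous.subtype_mk
  apply Continuous.subtype_mk
  apply continuous_matrix
  intro i j
  fin_cases i <;> fin_cases j <;> simp [Mrot] <;> fun_prop

/-- There is no continuous map `g : SO(3) \ {I} → ℝ³ \ {0}` assigning to every
non-identity rotation a nonzero vector on its rotation axis. -/
theorem no_continuous_axis_map :
    ¬ ∃ g : {A : Matrix.specialOrthogonalGroup (Fin 3) ℝ // A ≠ 1} →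
        {v : Fin 3 → ℝ // v ≠ 0},
      Continuous g ∧ ∀ A, (A.1 : Matrix (Fin 3) (Fin 3) ℝ).mulVec (g A).1 = (g A).1 := by
  rintro ⟨g, hg, hax⟩
  -- the scalar coordinate of the axis vector along (cos (θ/2), sin (θ/2), 0)
  set lam : ℝ → ℝ := fun θ =>
    cos (θ/2) * (g (Frot θ)).1 0 + sin (θ/2) * (g (Frot θ)).1 1 with hlam
  have hcont : Continuous lam := by
    apply Continuous.add
    · exact (Real.continuous_cos.comp (continuous_id.div_const 2)).mul
        ((continuous_apply 0).comp (continuous_subtype_val.comp (hg.comp continuous_Frot)))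
    · exact (Real.continuous_sin.comp (continuous_id.div_const 2)).mul
        ((continuous_apply 1).comp (continuous_subtype_val.comp (hg.comp continuous_Frot)))
  have key : ∀ θ, lam θ ≠ 0 := by
    intro θ hzero
    have hfix := hax (Frot θ)
    set v := (g (Frot θ)).1 with hv
    have hvne : v ≠ 0 := (g (Frot θ)).2
    have e0 : cos θ * v 0 + sin θ * v 1 = v 0 := by
      have := congrFun hfix 0
      simpa [Frot, Mrot, Matrix.mulVec, dotProduct, Fin.sum_univ_three,
        Matrix.vecHead, Matrix.vecTail] using this
    have e1 : sin θ * v 0 + -(cos θ * v 1) = v 1 := by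
      have := congrFun hfix 1
      simpa [Frot, Mrot, Matrix.mulVec, dotProduct, Fin.sum_univ_three,
        Matrix.vecHead, Matrix.vecTail] using this
    have e2 : v 2 = 0 := by
      have := congrFun hfix 2
      simp [Frot, Mrot, Matrix.mulVec, dotProduct, Fin.sum_univ_three,
        Matrix.vecHead, Matrix.vecTail] at this
      linarith
    set c := cos (θ/2) with hc
    set s := sin (θ/2) with hs
    have hcs : s ^ 2 + c ^ 2 = 1 := sin_sq_add_cos_sq _
    have hcosθ : cos θ = c ^ 2 - s ^ 2 := by
      have : cos (2 * (θ/2)) = c ^ 2 - s ^ 2 := by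
        rw [Real.cos_two_mul]; nlinarith
      rw [← this]; ring_nf
    have hsinθ : sin θ = 2 * s * c := by
      have : sin (2 * (θ/2)) = 2 * s * c := by
        rw [Real.sin_two_mul]; try ring
      rw [← this]; ring_nf
    rw [hcosθ, hsinθ] at e0 e1
    have hX : s * v 0 - c * v 1 = 0 := by
      linear_combination (-s/2) * e0 + (c/2) * e1 + (-(s * v 0)/2 + (c * v 1)/2) * hcs
    have hz : c * v 0 + s * v 1 = 0 := hzero
    have h0 : v 0 = 0 := by linear_combination c * hz + s * hX - v 0 * hcs
    have h1 : v 1 = 0 := by linear_combination s * hz - c * hX - v 1 * hcs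
    apply hvne
    funext i
    fin_cases i <;> simp [h0, h1, e2]
  -- Frot (2π) = Frot 0
  have hFeq : Frot (2 * π) = Frot 0 := by
    apply Subtype.ext
    apply Subtype.ext
    show Mrot (2 * π) = Mrot 0
    simp [Mrot, Real.cos_two_pi, Real.sin_two_pi]
  have hflip : lam (2 * π) = - lam 0 := by
    rw [hlam]
    simp only [hFeq]
    norm_num [Real.cos_pi, Real.sin_pi, mul_div_assoc]
  have hπ : (0:ℝ) ≤ 2 * π := by positivity
  rcases lt_trichotomy (lam 0) 0 with h | h | h
  · have h2 : 0 < lam (2 * π) := by rw [hflip]; linarith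
    have : (0:ℝ) ∈ Set.Icc (lam 0) (lam (2 * π)) := ⟨le_of_lt h, le_of_lt h2⟩
    obtain ⟨θ, _, hθ⟩ := intermediate_value_Icc hπ hcont.continuousOn this
    exact key θ hθ
  · exact key 0 h
  · have h2 : lam (2 * π) < 0 := by rw [hflip]; linarith
    have : (0:ℝ) ∈ Set.Icc (lam (2 * π)) (lam 0) := ⟨le_of_lt h2, le_of_lt h⟩
    obtain ⟨θ, _, hθ⟩ := intermediate_value_Icc' hπ hcont.continuousOn this
    exact key θ hθ
end

section
/- In the setting above, if σ : Q → C^I is a continuous section of π_f and c ∈ C, then the set Q|_c is contractible in W: the map H(w,t) = f(σ(c,w)(1−t)) is a homotopy in W from the inclusion Q|_c ↪ W to the constant map at f(c). -/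
theorem Continuous.uncurry_symm {Z X : Type*} [TopologicalSpace Z]
    [TopologicalSpace X] {γ : Z → C(unitInterval, X)} (hγ : Continuous γ) :
    Continuous fun p : Z × unitInterval => γ p.1 (unitInterval.symm p.2) :=
  continuous_eval.comp ((hγ.comp continuous_fst).prodMk
    (unitInterval.continuous_symm.comp continuous_snd))

theorem continuous_sliceInclusion {X Y : Type*} [TopologicalSpace X] [TopologicalSpace Y]
    (Q : Set (X × Y)) (x : X) :
    Continuous fun y : {y : Y // (x, y) ∈ Q} => (⟨(x, y.1), y.2⟩ : Q) := by
  fun_prop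

/-- If `σ` is a continuous section of `π_f` over `Q ⊆ C × W` and `c ∈ C`, then
`Q|_c` is contractible in `W`: the map `H(w,t) = f(σ(c,w)(1−t))` is a homotopy
in `W` from the inclusion `Q|_c ↪ W` to the constant map at `f(c)`. -/
theorem slice_contractible_in_W
    {C W : Type*} [TopologicalSpace C] [TopologicalSpace W]
    (f : C → W) (hf : Continuous f)
    (Q : Set (C × W)) (σ : Q → C(unitInterval, C)) (hσ : Continuous σ)
    (hσ0 : ∀ q : Q, σ q 0 = q.1.1) (hσ1 : ∀ q : Q, f (σ q 1) = q.1.2)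
    (c : C) :
    Continuous (fun p : {w : W // (c, w) ∈ Q} × unitInterval =>
        f (σ ⟨(c, p.1.1), p.1.2⟩ (unitInterval.symm p.2))) ∧
      (∀ w : {w : W // (c, w) ∈ Q}, f (σ ⟨(c, w.1), w.2⟩ (unitInterval.symm 0)) = w.1) ∧
      (∀ w : {w : W // (c, w) ∈ Q}, f (σ ⟨(c, w.1), w.2⟩ (unitInterval.symm 1)) = f c) := by
  refine ⟨hf.comp (hσ.comp (continuous_sliceInclusion Q c)).uncurry_symm,
    fun w => ?_, fun w => ?_⟩
  · rw [unitInterval.symm_zero]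
    exact hσ1 _
  · rw [unitInterval.symm_one, hσ0]
end

section
/- If π_f admits a global continuous section, then f admits a global continuous section s : W → C whose image s(W) is contractible in C. -/
def ContinuousMap.Homotopy.reversePathFamily {X Y : Type*} [TopologicalSpace X]
    [TopologicalSpace Y] (γ : C(X, C(unitInterval, Y))) (y₀ : Y) (hγ₀ : ∀ x, γ x 0 = y₀) :
    ContinuousMap.Homotopy ⟨fun x => γ x 1, by fun_prop⟩ (ContinuousMap.const X y₀) where
  toFun p := γ p.2 (unitInterval.symm p.1)
  continuous_toFun := by fun_prop
  map_zero_left x := by simp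
  map_one_left x := by simp [hγ₀]

theorem global_section_of_pi_f_section_general
    {C W : Type*} [TopologicalSpace C] [TopologicalSpace W]
    [PathConnectedSpace C]
    (f : C → W)
    (σ : C × W → C(unitInterval, C)) (hσ : Continuous σ)
    (hσ0 : ∀ p : C × W, σ p 0 = p.1) (hσ1 : ∀ p : C × W, f (σ p 1) = p.2) :
    ∃ s : W → C, Continuous s ∧ (∀ w, f (s w) = w) ∧
      ∃ (c₀ : C) (K : W × unitInterval → C), Continuous K ∧
        (∀ w, K (w, 0) = s w) ∧ (∀ w, K (w, 1) = c₀) := by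
  obtain ⟨c₀⟩ : Nonempty C := inferInstance
  let γ : C(W, C(unitInterval, C)) := ⟨fun w => σ (c₀, w), by fun_prop⟩
  let H := ContinuousMap.Homotopy.reversePathFamily γ c₀ fun w => hσ0 (c₀, w)
  exact ⟨fun w => σ (c₀, w) 1, by fun_prop, fun w => hσ1 (c₀, w), c₀, fun p => H (p.2, p.1),
    by fun_prop, fun w => H.apply_zero w, fun w => H.apply_one w⟩

/-- If `π_f` admits a global continuous section, then `f` admits a global
continuous section `s : W → C` whose image is contractible in `C`. -/
theorem global_section_of_pi_f_section
    {C W : Type*} [TopologicalSpace C] [TopologicalSpace W]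
    [PathConnectedSpace C] [PathConnectedSpace W]
    (f : C → W) (hf : Continuous f) (hsurj : Function.Surjective f)
    (σ : C × W → C(unitInterval, C)) (hσ : Continuous σ)
    (hσ0 : ∀ p : C × W, σ p 0 = p.1) (hσ1 : ∀ p : C × W, f (σ p 1) = p.2) :
    ∃ s : W → C, Continuous s ∧ (∀ w, f (s w) = w) ∧
      ∃ (c₀ : C) (K : W × unitInterval → C), Continuous K ∧
        (∀ w, K (w, 0) = s w) ∧ (∀ w, K (w, 1) = c₀) :=
  global_section_of_pi_f_section_general f σ hσ hσ0 hσ1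
end
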